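/- For every integer n ≥ 2, one has Z(F_n + 1) = F_{n+2} + 1, where F_m denotes the m-th Fibonacci number. -/

import Mathlib

/-!
Reading a number from its lowest bits, a fibbinary number is either `2 * r` or `4 * r + 1`
with `r` fibbinary. Hence the odd fibbinary numbers are exactly the `4 * r + 1`, and the
fibbinary numbers below `4 * t` number those below `2 * t` plus those below `t`, so
`F (k + 2)` of them lie below `2 ^ k`. Consequently the `(F n + 1)`-st odd fibbinary number is
`4 * 2 ^ (n - 2) + 1 = 2 ^ n + 1`; it is preceded by `F (n + 2)` fibbinary numbers counting
`0`, so it is the `(F (n + 2) + 1)`-st positive one.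
-/

/-- A natural number is *fibbinary* if its binary representation
contains no two consecutive ones. -/
def IsFibbinary (m : ℕ) : Prop :=
  ∀ i : ℕ, ¬(m.testBit i = true ∧ m.testBit (i + 1) = true)

/-- `fibbin n` is the `n`-th fibbinary number, i.e. the `n`-th positive integer
(1-indexed, in increasing order) whose binary representation has no two
consecutive ones. -/
noncomputable def fibbin (n : ℕ) : ℕ :=
  Nat.nth (fun m => 0 < m ∧ IsFibbinary m) (n - 1)

/-- `odfib n` is the `n`-th odd fibbinary number
(1-indexed, in increasing order). -/
noncomputable def odfib (n : ℕ) : ℕ :=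
  Nat.nth (fun m => Odd m ∧ IsFibbinary m) (n - 1)

/-- `Z n` is the index `j` such that the `j`-th fibbinary number equals the
`n`-th odd fibbinary number, i.e. `Z n = fibbin⁻¹ (odfib n)`. -/
noncomputable def Z (n : ℕ) : ℕ :=
  sInf {j : ℕ | 1 ≤ j ∧ fibbin j = odfib n}

namespace Nat

theorem count_eq_count_of_injective {p q : ℕ → Prop} [DecidablePred p] [DecidablePred q]
    {f : ℕ → ℕ} (hf : f.Injective) (hq : ∀ m, q m ↔ ∃ r, p r ∧ f r = m) {n t : ℕ}
    (hn : ∀ r, f r < n ↔ r < t) : count q n = count p t := by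
  simp only [count_eq_card_filter_range]
  symm
  rw [← Finset.card_image_of_injective _ hf]
  congr 1
  ext m
  simp only [Finset.mem_filter, Finset.mem_range, Finset.mem_image, hq]
  constructor
  · rintro ⟨r, ⟨hrt, hr⟩, rfl⟩
    exact ⟨(hn r).2 hrt, r, hr, rfl⟩
  · rintro ⟨hm, r, hr, rfl⟩
    exact ⟨r, ⟨(hn r).1 hm, hr⟩, rfl⟩

theorem count_and_add_count_and_not (p q : ℕ → Prop) [DecidablePred p] [DecidablePred q]
    (n : ℕ) : count (fun m => p m ∧ q m) n + count (fun m => p m ∧ ¬q m) n = count p n := by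
  simp only [count_eq_card_filter_range, ← Finset.filter_filter,
    Finset.card_filter_add_card_filter_not]

theorem count_pos_and_add_one {p : ℕ → Prop} [DecidablePred p] (hp : p 0) (n : ℕ) :
    count (fun m => 0 < m ∧ p m) (n + 1) + 1 = count p (n + 1) := by
  simp [count_succ', hp]

end Nat

theorem isFibbinary_iff_div_two (m : ℕ) :
    IsFibbinary m ↔ ¬(m.testBit 0 = true ∧ m.testBit 1 = true) ∧ IsFibbinary (m / 2) := by
  simp only [IsFibbinary, Nat.testBit_div_two]
  constructor
  · intro h
    exact ⟨h 0, fun i => h (i + 1)⟩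
  · rintro ⟨h0, h⟩ (_ | i)
    exacts [h0, h i]

theorem isFibbinary_zero : IsFibbinary 0 := by
  simp [IsFibbinary]

theorem isFibbinary_two_mul (r : ℕ) : IsFibbinary (2 * r) ↔ IsFibbinary r := by
  simp [isFibbinary_iff_div_two (2 * r), Nat.testBit_zero]

theorem isFibbinary_four_mul_add_one (r : ℕ) : IsFibbinary (4 * r + 1) ↔ IsFibbinary r := by
  rw [isFibbinary_iff_div_two, show (4 * r + 1) / 2 = 2 * r by omega, isFibbinary_two_mul]
  simp only [Nat.testBit_zero, decide_eq_true_eq, Nat.testBit_add_one, not_and,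
    Nat.mod_two_not_eq_one, and_iff_right_iff_imp]
  omega

theorem IsFibbinary.mod_four_eq_one {m : ℕ} (hm : IsFibbinary m) (ho : Odd m) : m % 4 = 1 := by
  have hodd := Nat.odd_iff.1 ho
  have hbits := ((isFibbinary_iff_div_two m).1 hm).1
  simp only [Nat.testBit_zero, hodd, decide_true, Nat.testBit_add_one,
    decide_eq_true_eq, true_and, Nat.mod_two_not_eq_one] at hbits
  omega

theorem isFibbinary_two_pow (k : ℕ) : IsFibbinary (2 ^ k) := by
  induction k with
  | zero => simpa using (isFibbinary_four_mul_add_one 0).2 isFibbinary_zero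
  | succ k ih => rwa [pow_succ', isFibbinary_two_mul]

theorem isFibbinary_and_even_iff (m : ℕ) :
    IsFibbinary m ∧ Even m ↔ ∃ r, IsFibbinary r ∧ 2 * r = m := by
  constructor
  · rintro ⟨hm, r, rfl⟩
    exact ⟨r, by rwa [← two_mul, isFibbinary_two_mul] at hm, two_mul r⟩
  · rintro ⟨r, hr, rfl⟩
    exact ⟨(isFibbinary_two_mul r).2 hr, even_two_mul r⟩

theorem odd_and_isFibbinary_iff (m : ℕ) :
    Odd m ∧ IsFibbinary m ↔ ∃ r, IsFibbinary r ∧ 4 * r + 1 = m := by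
  constructor
  · rintro ⟨ho, hm⟩
    have hm4 := hm.mod_four_eq_one ho
    refine ⟨m / 4, ?_, by omega⟩
    rwa [← isFibbinary_four_mul_add_one, show 4 * (m / 4) + 1 = m by omega]
  · rintro ⟨r, hr, rfl⟩
    exact ⟨⟨2 * r, by ring⟩, (isFibbinary_four_mul_add_one r).2 hr⟩

open Classical in
theorem count_odd_isFibbinary (t : ℕ) :
    Nat.count (fun m => Odd m ∧ IsFibbinary m) (4 * t + 1) = Nat.count IsFibbinary t :=
  Nat.count_eq_count_of_injective (f := fun r => 4 * r + 1)
    (fun _ _ h => by dsimp only at h; omega) odd_and_isFibbinary_iff (fun r => by omega)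

open Classical in
theorem count_isFibbinary_four_mul (t : ℕ) :
    Nat.count IsFibbinary (4 * t) = Nat.count IsFibbinary (2 * t) + Nat.count IsFibbinary t := by
  rw [← Nat.count_and_add_count_and_not IsFibbinary Even]
  congr 1
  · exact Nat.count_eq_count_of_injective (f := (2 * ·)) (fun _ _ h => by dsimp only at h; omega)
      isFibbinary_and_even_iff (fun r => by omega)
  · refine Nat.count_eq_count_of_injective (f := fun r => 4 * r + 1)
      (fun _ _ h => by dsimp only at h; omega) (fun m => ?_) (fun r => by omega)
    rw [Nat.not_even_iff_odd, and_comm, odd_and_isFibbinary_iff]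

open Classical in
theorem count_isFibbinary_two_pow (k : ℕ) : Nat.count IsFibbinary (2 ^ k) = Nat.fib (k + 2) := by
  induction k using Nat.twoStepInduction with
  | zero => simp [Nat.count_one, isFibbinary_zero]
  | one =>
    simp [Nat.count_succ, isFibbinary_zero, by simpa using isFibbinary_two_pow 0, Nat.fib_add_two]
  | more k ih₀ ih₁ =>
    rw [show 2 ^ (k + 2) = 4 * 2 ^ k by ring, count_isFibbinary_four_mul, ← pow_succ', ih₀, ih₁,
      Nat.fib_add_two (n := k + 2)]
    ring

theorem isFibbinary_two_pow_add_one {n : ℕ} (hn : 2 ≤ n) : IsFibbinary (2 ^ n + 1) := by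
  obtain ⟨k, rfl⟩ := Nat.exists_eq_add_of_le' hn
  rw [show 2 ^ (k + 2) + 1 = 4 * 2 ^ k + 1 by ring, isFibbinary_four_mul_add_one]
  exact isFibbinary_two_pow k

theorem infinite_setOf_pos_isFibbinary : {m | 0 < m ∧ IsFibbinary m}.Infinite :=
  Set.infinite_of_injective_forall_mem (Nat.pow_right_injective le_rfl)
    fun k => ⟨Nat.two_pow_pos k, isFibbinary_two_pow k⟩

theorem fibbin_injOn : Set.InjOn fibbin (Set.Ici 1) := fun a ha b hb h => by
  have hab := Nat.nth_injective infinite_setOf_pos_isFibbinary h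
  simp only [Set.mem_Ici] at ha hb
  omega

theorem Z_eq_of_fibbin_eq {n j : ℕ} (hj : 1 ≤ j) (h : fibbin j = odfib n) : Z n = j := by
  have : {i | 1 ≤ i ∧ fibbin i = odfib n} = {j} := by
    ext i
    constructor
    · rintro ⟨hi, hi'⟩
      exact fibbin_injOn hi hj (hi'.trans h.symm)
    · rintro rfl
      exact ⟨hj, h⟩
  rw [Z, this, csInf_singleton]

open Classical in
theorem odfib_fib_add_one {n : ℕ} (hn : 2 ≤ n) : odfib (Nat.fib n + 1) = 2 ^ n + 1 := by
  obtain ⟨k, rfl⟩ := Nat.exists_eq_add_of_le' hn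
  have hpow : 2 ^ (k + 2) + 1 = 4 * 2 ^ k + 1 := by ring
  have hcount :
      Nat.count (fun m => Odd m ∧ IsFibbinary m) (2 ^ (k + 2) + 1) = Nat.fib (k + 2) := by
    rw [hpow, count_odd_isFibbinary, count_isFibbinary_two_pow]
  rw [odfib, Nat.add_sub_cancel, ← hcount, Nat.nth_count]
  exact ⟨⟨2 ^ (k + 1), by ring⟩, isFibbinary_two_pow_add_one hn⟩

open Classical in
theorem fibbin_fib_add_two_add_one {n : ℕ} (hn : 2 ≤ n) :
    fibbin (Nat.fib (n + 2) + 1) = 2 ^ n + 1 := by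
  have hcount : Nat.count (fun m => 0 < m ∧ IsFibbinary m) (2 ^ n + 1) = Nat.fib (n + 2) := by
    have hpos := Nat.count_pos_and_add_one isFibbinary_zero (2 ^ n)
    rw [Nat.count_succ_eq_succ_count_iff.2 (isFibbinary_two_pow n), count_isFibbinary_two_pow]
      at hpos
    omega
  rw [fibbin, Nat.add_sub_cancel, ← hcount, Nat.nth_count]
  exact ⟨by positivity, isFibbinary_two_pow_add_one hn⟩

/-- For `n ≥ 2`, `Z (F_n + 1) = F_{n+2} + 1`. -/
theorem Z_fib_add_one (n : ℕ) (hn : 2 ≤ n) :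
    Z (Nat.fib n + 1) = Nat.fib (n + 2) + 1 :=
  Z_eq_of_fibbin_eq (by omega) <| by rw [fibbin_fib_add_two_add_one hn, odfib_fib_add_one hn]
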